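/- arXiv:2412.11235 — 2 statements merged into one kernel-verified Lean document; each statement's English description precedes it below -/
import Mathlib

section
/- Let R = K[x₁,…,x_n], let I = (x₁,…,x_n) be its maximal ideal, let Y be an n×n matrix of indeterminates, S = R[Y], a the ideal generated by the entries of Y·[x₁,…,x_n]ᵀ, and J = a : I S; then the initial ideal of J with respect to the order making Y_{1,1} > Y_{2,2} > … > Y_{n,n} dominate is (Y_{1,1}x₁, …, Y_{n,n}x_n, Y_{1,1}Y_{2,2}⋯Y_{n,n}). -/
set_option maxHeartbeats 1000000


open MvPolynomial

variable {K : Type*} [Field K]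

/-- The exponent of the initial (leading) term of a polynomial `f` with respect to a
monomial order `mo`: the largest exponent in the support of `f`. -/
noncomputable def leadExp {σ : Type*} (mo : MonomialOrder σ) (f : MvPolynomial σ K) :
    σ →₀ ℕ :=
  mo.toSyn.symm (f.support.sup ⇑mo.toSyn)

/-- The initial ideal `in_mo(U)`: the ideal generated by the initial monomials of the
nonzero elements of `U`. -/
noncomputable def initialIdeal {σ : Type*} (mo : MonomialOrder σ)
    (U : Ideal (MvPolynomial σ K)) : Ideal (MvPolynomial σ K) :=
  Ideal.span { g | ∃ f ∈ U, f ≠ 0 ∧ g = (monomial (leadExp mo f) (1 : K)) }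

/-- `W` is a squarefree monomial ideal: it is generated by monomials with squarefree
exponents. -/
def IsSquarefreeMonomialIdeal {σ : Type*} (W : Ideal (MvPolynomial σ K)) : Prop :=
  ∃ S : Set (σ →₀ ℕ), (∀ d ∈ S, ∀ i, d i ≤ 1) ∧
    W = Ideal.span ((fun d => (monomial d (1 : K) : MvPolynomial σ K)) '' S)

/-- The symbolic power `I^{(n)} = ⋂_{p ∈ Min(I)} (pⁿ R_p ∩ R)`. -/
noncomputable def symbolicPower {R : Type*} [CommRing R] (I : Ideal R) (n : ℕ) : Ideal R :=
  ⨅ p : {q : Ideal R // q ∈ I.minimalPrimes},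
    letI : p.1.IsPrime := p.2.1.1
    ((p.1 ^ n).map (algebraMap R (Localization.AtPrime p.1))).comap
      (algebraMap R (Localization.AtPrime p.1))

namespace Stmt15Aux

variable {σ : Type*} {mo : MonomialOrder σ}

lemma lead_mem {f : MvPolynomial σ K} (hf : f ≠ 0) : leadExp mo f ∈ f.support := by
  obtain ⟨b, hb, h⟩ := Finset.exists_mem_eq_sup f.support (support_nonempty.mpr hf) ⇑mo.toSyn
  rw [leadExp, h, AddEquiv.symm_apply_apply]; exact hb

lemma le_lead {f : MvPolynomial σ K} {b} (hb : b ∈ f.support) :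
    mo.toSyn b ≤ mo.toSyn (leadExp mo f) := by
  rw [leadExp, AddEquiv.apply_symm_apply]; exact Finset.le_sup hb

lemma lt_lead {f : MvPolynomial σ K} {b} (hb : b ∈ f.support) (hne : b ≠ leadExp mo f) :
    mo.toSyn b < mo.toSyn (leadExp mo f) :=
  lt_of_le_of_ne (le_lead hb) (fun h => hne (mo.toSyn.injective h))

lemma lead_coeff_ne_zero {f : MvPolynomial σ K} (hf : f ≠ 0) :
    coeff (leadExp mo f) f ≠ 0 := mem_support_iff.mp (lead_mem hf)

lemma lead_eq_of {f : MvPolynomial σ K} {b} (hc : coeff b f ≠ 0)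
    (hs : ∀ c ∈ f.support, mo.toSyn c ≤ mo.toSyn b) : leadExp mo f = b := by
  have hf : f ≠ 0 := fun h => hc (by simp [h])
  exact mo.toSyn.injective (le_antisymm (hs _ (lead_mem hf))
    (le_lead (mem_support_iff.mpr hc)))

lemma lead_monomial {e : σ →₀ ℕ} {c : K} (hc : c ≠ 0) : leadExp mo (monomial e c) = e := by
  classical
  apply lead_eq_of (by rwa [coeff_monomial, if_pos rfl])
  intro d hd
  rw [support_monomial, if_neg hc, Finset.mem_singleton] at hd
  exact le_of_eq (congrArg _ hd)

lemma mul_support_sub {p q : MvPolynomial σ K} {b} (hb : b ∈ (p * q).support) :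
    ∃ c ∈ p.support, ∃ d ∈ q.support, c + d = b := by
  classical
  exact Finset.mem_add.mp (support_mul p q hb)

lemma coeff_mul_lead (p q : MvPolynomial σ K) (hp : p ≠ 0) (hq : q ≠ 0) :
    coeff (leadExp mo p + leadExp mo q) (p * q)
      = coeff (leadExp mo p) p * coeff (leadExp mo q) q := by
  classical
  rw [coeff_mul]
  refine Finset.sum_eq_single (leadExp mo p, leadExp mo q) ?_ ?_
  · rintro ⟨c, d⟩ hx hne
    rw [Finset.HasAntidiagonal.mem_antidiagonal] at hx
    by_cases h1 : coeff c p = 0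
    · simp [h1]
    by_cases h2 : coeff d q = 0
    · simp [h2]
    exfalso
    have hle1 := le_lead (mo := mo) (mem_support_iff.mpr h1)
    have hle2 := le_lead (mo := mo) (mem_support_iff.mpr h2)
    have hsum : mo.toSyn c + mo.toSyn d
        = mo.toSyn (leadExp mo p) + mo.toSyn (leadExp mo q) := by
      rw [← map_add, hx, map_add]
    have e1 : mo.toSyn c = mo.toSyn (leadExp mo p) := by
      refine le_antisymm hle1 ?_
      have : mo.toSyn (leadExp mo p) + mo.toSyn d ≤ mo.toSyn c + mo.toSyn d := by
        rw [hsum]; exact add_le_add_right hle2 _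
      exact le_of_add_le_add_right this
    have e2 : mo.toSyn d = mo.toSyn (leadExp mo q) := by
      have := hsum
      rw [e1] at this
      exact add_left_cancel this
    exact hne (Prod.ext (mo.toSyn.injective e1) (mo.toSyn.injective e2))
  · intro h; exact absurd (Finset.HasAntidiagonal.mem_antidiagonal.mpr (by simp)) h

lemma coeff_mul_lt {p q : MvPolynomial σ K} {b}
    (h : mo.toSyn (leadExp mo p) + mo.toSyn (leadExp mo q) < mo.toSyn b) :
    coeff b (p * q) = 0 := by
  by_contra hc
  obtain ⟨c, hcs, d, hds, rfl⟩ := mul_support_sub (mem_support_iff.mpr hc)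
  have : mo.toSyn (c + d) ≤ mo.toSyn (leadExp mo p) + mo.toSyn (leadExp mo q) := by
    rw [map_add]; exact add_le_add (le_lead hcs) (le_lead hds)
  exact absurd h (not_lt.mpr this)

lemma lead_mul_X {f : MvPolynomial σ K} (hf : f ≠ 0) (s : σ) :
    leadExp mo (f * X s) = leadExp mo f + Finsupp.single s 1 := by
  classical
  have hx : (X s : MvPolynomial σ K) = monomial (Finsupp.single s 1) 1 := rfl
  apply lead_eq_of
  · have h2 := coeff_mul_lead (mo := mo) f (X s) hf (X_ne_zero s)
    rw [hx, lead_monomial (mo := mo) (one_ne_zero (α := K)) (e := Finsupp.single s 1),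
      coeff_monomial, if_pos rfl, mul_one, ← hx] at h2
    rw [h2]
    exact lead_coeff_ne_zero hf
  · intro b hb
    obtain ⟨c, hcs, d, hds, rfl⟩ := mul_support_sub hb
    rw [hx, support_monomial, if_neg (one_ne_zero (α := K)), Finset.mem_singleton] at hds
    subst hds
    rw [map_add, map_add]
    exact add_le_add_left (le_lead hcs) _

lemma prod_X_monomial {ι : Type*} (s : Finset ι) (g : ι → σ) :
    (∏ i ∈ s, (X (g i) : MvPolynomial σ K)) = monomial (∑ i ∈ s, Finsupp.single (g i) 1) 1 := by
  classical
  induction s using Finset.induction_on with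
  | empty => simp
  | insert _ _ hx ih =>
    rw [Finset.prod_insert hx, Finset.sum_insert hx, ih]
    rw [show (X (g _) : MvPolynomial σ K) = monomial (Finsupp.single (g _) 1) 1 from rfl,
      monomial_mul, one_mul]

lemma X_mul_X (s t : σ) :
    (X s * X t : MvPolynomial σ K) = monomial (Finsupp.single s 1 + Finsupp.single t 1) 1 := by
  rw [show (X s : MvPolynomial σ K) = monomial (Finsupp.single s 1) 1 from rfl,
    show (X t : MvPolynomial σ K) = monomial (Finsupp.single t 1) 1 from rfl,
    monomial_mul, one_mul]

section Specific
variable {K : Type*} [Field K] {n : ℕ}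

noncomputable def Eexp (i : Fin n) : (Fin n ⊕ Fin n × Fin n) →₀ ℕ :=
  Finsupp.single (Sum.inr (i, i)) 1 + Finsupp.single (Sum.inl i) 1

noncomputable def mExp (i j : Fin n) : (Fin n ⊕ Fin n × Fin n) →₀ ℕ :=
  Finsupp.single (Sum.inr (i, j)) 1 + Finsupp.single (Sum.inl j) 1

noncomputable def fgen (K : Type*) [Field K] {n : ℕ} (i : Fin n) :
    MvPolynomial (Fin n ⊕ Fin n × Fin n) K :=
  ∑ j : Fin n, X (Sum.inr (i, j)) * X (Sum.inl j)

def DiagDom (mo : MonomialOrder (Fin n ⊕ Fin n × Fin n)) : Prop :=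
  ∀ u v : (Fin n ⊕ Fin n × Fin n) →₀ ℕ,
    toLex (fun i : Fin n => u (Sum.inr (i, i))) <
        toLex (fun i : Fin n => v (Sum.inr (i, i))) →
      mo.toSyn u < mo.toSyn v

variable {mo : MonomialOrder (Fin n ⊕ Fin n × Fin n)}

lemma toSyn_lt_of_diag (hmo : DiagDom mo) {u v : (Fin n ⊕ Fin n × Fin n) →₀ ℕ} (i : Fin n)
    (h1 : ∀ k, k < i → u (Sum.inr (k, k)) = v (Sum.inr (k, k)))
    (h2 : u (Sum.inr (i, i)) < v (Sum.inr (i, i))) : mo.toSyn u < mo.toSyn v :=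
  hmo u v ⟨i, fun j hj => h1 j hj, h2⟩

lemma mExp_apply_inl (i j k : Fin n) :
    mExp i j (Sum.inl k) = if j = k then 1 else 0 := by
  simp [mExp, Finsupp.single_apply]

lemma mExp_apply_diag (i j k : Fin n) :
    mExp i j (Sum.inr (k, k)) = if i = k ∧ j = k then 1 else 0 := by
  simp [mExp, Finsupp.single_apply, Prod.ext_iff]

lemma Eexp_apply_diag (i k : Fin n) :
    Eexp i (Sum.inr (k, k)) = if i = k then 1 else 0 := by
  simp [Eexp, Finsupp.single_apply, Prod.ext_iff]

lemma Eexp_apply_inl (i k : Fin n) :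
    Eexp i (Sum.inl k) = if i = k then 1 else 0 := by
  simp [Eexp, Finsupp.single_apply]

lemma fgen_eq (i : Fin n) : fgen K i = ∑ j : Fin n, monomial (mExp i j) (1 : K) :=
  Finset.sum_congr rfl fun j _ => X_mul_X _ _

lemma mExp_inj {i j j' : Fin n} (h : mExp i j = mExp (n := n) i j') : j = j' := by
  have h2 := DFunLike.congr_fun h (Sum.inl j)
  rw [mExp_apply_inl, mExp_apply_inl, if_pos rfl] at h2
  by_contra hne
  rw [if_neg (Ne.symm hne)] at h2
  exact one_ne_zero h2

lemma coeff_fgen (i j : Fin n) : coeff (mExp i j) (fgen K i) = 1 := by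
  classical
  rw [fgen_eq, coeff_sum]
  rw [Finset.sum_eq_single j
    (fun j' _ hne => by rw [coeff_monomial, if_neg (fun h => hne (mExp_inj h))])
    (fun h => absurd (Finset.mem_univ j) h), coeff_monomial, if_pos rfl]

lemma fgen_ne_zero {i : Fin n} : fgen K (n := n) i ≠ 0 := fun h => by
  have h2 := coeff_fgen (K := K) i i; rw [h] at h2; simp at h2

lemma support_fgen {i : Fin n} {b} (hb : b ∈ (fgen K (n := n) i).support) :
    ∃ j, b = mExp i j := by
  classical
  rw [fgen_eq] at hb
  obtain ⟨j, -, hj⟩ := Finset.mem_biUnion.mp (support_sum hb)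
  rw [support_monomial, if_neg (one_ne_zero (α := K)), Finset.mem_singleton] at hj
  exact ⟨j, hj⟩

lemma lead_fgen (hmo : DiagDom mo) (i : Fin n) : leadExp mo (fgen K (n := n) i) = Eexp i := by
  apply lead_eq_of
  · rw [show Eexp i = mExp i i from rfl, coeff_fgen]; exact one_ne_zero
  · intro b hb
    obtain ⟨j, rfl⟩ := support_fgen hb
    rcases eq_or_ne j i with rfl | hne
    · exact le_of_eq (congrArg _ rfl)
    · refine le_of_lt (toSyn_lt_of_diag hmo i ?_ ?_)
      · intro k hk
        have hki : ¬ i = k := fun h => (ne_of_lt hk) h.symm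
        rw [mExp_apply_diag, Eexp_apply_diag, if_neg (fun hc => hki hc.1), if_neg hki]
      · rw [mExp_apply_diag, Eexp_apply_diag, if_neg (fun hc => hne hc.2), if_pos rfl]
        exact Nat.zero_lt_one

end Specific
section Det
variable {K : Type*} [Field K] {n : ℕ} {mo : MonomialOrder (Fin n ⊕ Fin n × Fin n)}

noncomputable def Pexp (n : ℕ) : (Fin n ⊕ Fin n × Fin n) →₀ ℕ :=
  ∑ i : Fin n, Finsupp.single (Sum.inr (i, i)) 1

noncomputable def permExp (σp : Equiv.Perm (Fin n)) : (Fin n ⊕ Fin n × Fin n) →₀ ℕ :=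
  ∑ i : Fin n, Finsupp.single (Sum.inr (σp i, i)) 1

lemma Pexp_eq_permExp : Pexp n = permExp (1 : Equiv.Perm (Fin n)) := rfl

lemma permExp_apply_inr (σp : Equiv.Perm (Fin n)) (a b : Fin n) :
    permExp σp (Sum.inr (a, b)) = if σp b = a then 1 else 0 := by
  classical
  rw [permExp, Finsupp.finset_sum_apply]
  rw [Finset.sum_eq_single b
    (fun k _ hk => Finsupp.single_eq_of_ne' (fun hc => hk (congrArg Prod.snd (Sum.inr.inj hc))))
    (fun h => absurd (Finset.mem_univ b) h)]
  by_cases h : σp b = a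
  · rw [if_pos h, Finsupp.single_apply, if_pos (by rw [h])]
  · rw [if_neg h, Finsupp.single_apply,
      if_neg (fun hc => h (congrArg Prod.fst (Sum.inr.inj hc)))]

lemma permExp_apply_inl (σp : Equiv.Perm (Fin n)) (k : Fin n) :
    permExp σp (Sum.inl k) = 0 := by
  rw [permExp, Finsupp.finset_sum_apply]
  exact Finset.sum_eq_zero fun i _ => Finsupp.single_eq_of_ne (by simp)

noncomputable def Mmat (K : Type*) [Field K] (n : ℕ) :
    Matrix (Fin n) (Fin n) (MvPolynomial (Fin n ⊕ Fin n × Fin n) K) :=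
  Matrix.of fun i j => X (Sum.inr (i, j))

lemma det_eq :
    (Mmat K n).det
      = ∑ σp : Equiv.Perm (Fin n),
          monomial (permExp σp) (((Equiv.Perm.sign σp : ℤ) : K)) := by
  rw [Matrix.det_apply]
  refine Finset.sum_congr rfl fun σp _ => ?_
  have hp : (∏ i : Fin n, Mmat K n (σp i) i) = monomial (permExp σp) (1 : K) :=
    prod_X_monomial Finset.univ (fun i => Sum.inr (σp i, i))
  rw [hp, Units.smul_def, zsmul_eq_mul,
    show ((((Equiv.Perm.sign σp) : ℤ) : MvPolynomial (Fin n ⊕ Fin n × Fin n) K))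
        = C (((Equiv.Perm.sign σp : ℤ) : K)) from (map_intCast (C : K →+* _) _).symm,
    C_mul_monomial, mul_one]

lemma permExp_eq_one {σp : Equiv.Perm (Fin n)} (h : permExp σp = Pexp n) : σp = 1 := by
  refine Equiv.ext fun b => ?_
  rw [Equiv.Perm.one_apply]
  have h2 := DFunLike.congr_fun h (Sum.inr (b, b))
  rw [permExp_apply_inr, Pexp_eq_permExp, permExp_apply_inr, if_pos (Equiv.Perm.one_apply b)]
    at h2
  by_contra hne
  rw [if_neg hne] at h2
  exact zero_ne_one h2

lemma coeff_det : coeff (Pexp n) (Mmat K n).det = 1 := by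
  classical
  rw [det_eq, coeff_sum]
  rw [Finset.sum_eq_single (1 : Equiv.Perm (Fin n))
    (fun σp _ hne => by
      rw [coeff_monomial, if_neg (fun hc => hne (permExp_eq_one hc))])
    (fun h => absurd (Finset.mem_univ _) h)]
  rw [coeff_monomial, if_pos Pexp_eq_permExp.symm]
  simp

lemma det_ne_zero : (Mmat K n).det ≠ 0 := fun h => by
  have h2 := coeff_det (K := K) (n := n); rw [h] at h2; simp at h2

lemma support_det {b} (hb : b ∈ (Mmat K n).det.support) : ∃ σp, b = permExp σp := by
  classical
  rw [det_eq] at hb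
  obtain ⟨σp, -, h⟩ := Finset.mem_biUnion.mp (support_sum hb)
  rw [support_monomial] at h
  split_ifs at h with hc
  · exact absurd h (Finset.notMem_empty b)
  · exact ⟨σp, Finset.mem_singleton.mp h⟩

lemma lead_det (hmo : DiagDom mo) : leadExp mo (Mmat K n).det = Pexp n := by
  apply lead_eq_of
  · rw [coeff_det]; exact one_ne_zero
  · intro b hb
    obtain ⟨σp, rfl⟩ := support_det hb
    rcases eq_or_ne σp 1 with rfl | hne
    · exact le_of_eq (congrArg _ Pexp_eq_permExp.symm)
    · have hex : ∃ k, σp k ≠ k := by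
        by_contra hc; push_neg at hc; exact hne (Equiv.ext hc)
      have hsne : (Finset.univ.filter (fun k => σp k ≠ k)).Nonempty :=
        ⟨hex.choose, Finset.mem_filter.mpr ⟨Finset.mem_univ _, hex.choose_spec⟩⟩
      set s := Finset.univ.filter (fun k => σp k ≠ k)
      set i := s.min' hsne with hidef
      have hi : σp i ≠ i := (Finset.mem_filter.mp (s.min'_mem hsne)).2
      refine le_of_lt (toSyn_lt_of_diag hmo i ?_ ?_)
      · intro k hk
        have hkfix : σp k = k := by
          by_contra hkc
          exact absurd (s.min'_le k (Finset.mem_filter.mpr ⟨Finset.mem_univ _, hkc⟩))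
            (not_le.mpr hk)
        rw [permExp_apply_inr, Pexp_eq_permExp, permExp_apply_inr, if_pos hkfix,
          if_pos (Equiv.Perm.one_apply k)]
      · rw [permExp_apply_inr, Pexp_eq_permExp, permExp_apply_inr, if_neg hi,
          if_pos (Equiv.Perm.one_apply i)]
        exact Nat.zero_lt_one

lemma det_colon :
    (Mmat K n).det ∈ Submodule.colon
      (Ideal.span (Set.range (fgen K (n := n))))
      (Ideal.span (Set.range fun j : Fin n =>
        (X (Sum.inl j) : MvPolynomial (Fin n ⊕ Fin n × Fin n) K))) := by
  rw [Submodule.mem_colon]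
  intro p hp
  induction hp using Submodule.span_induction with
  | mem x hx =>
    obtain ⟨j, rfl⟩ := hx
    rw [smul_eq_mul]
    have h1 : ((Mmat K n).adjugate * Mmat K n).mulVec
        (fun j => (X (Sum.inl j) : MvPolynomial (Fin n ⊕ Fin n × Fin n) K)) j
        = ∑ i, (Mmat K n).adjugate j i * fgen K i := by
      rw [← Matrix.mulVec_mulVec]
      simp [Matrix.mulVec, dotProduct, fgen, Mmat]
    rw [Matrix.adjugate_mul, Matrix.smul_mulVec, Matrix.one_mulVec] at h1
    rw [Pi.smul_apply, smul_eq_mul] at h1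
    rw [h1]
    exact Ideal.sum_mem _ fun i _ => Ideal.mul_mem_left _ _ (Ideal.subset_span ⟨i, rfl⟩)
  | zero => simp
  | add x y _ _ hx hy => rw [smul_add]; exact Ideal.add_mem _ hx hy
  | smul c x _ hx => rw [smul_comm]; exact Submodule.smul_mem _ c hx

end Det
section Key
variable {K : Type*} [Field K] {n : ℕ} {mo : MonomialOrder (Fin n ⊕ Fin n × Fin n)}

lemma Eexp_apply_inr (i a b : Fin n) :
    Eexp i (Sum.inr (a, b)) = if i = a ∧ i = b then 1 else 0 := by
  simp [Eexp, Finsupp.single_apply, Prod.ext_iff]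

lemma Eexp_disj {i j : Fin n} (hij : i ≠ j) (s : Fin n ⊕ Fin n × Fin n) :
    Eexp i s = 0 ∨ Eexp j s = 0 := by
  rcases s with k | ⟨a, b⟩
  · rw [Eexp_apply_inl, Eexp_apply_inl]
    split_ifs with h1 h2
    · exact absurd (h1.trans h2.symm) hij
    · right; rfl
    · left; rfl
    · left; rfl
  · rw [Eexp_apply_inr, Eexp_apply_inr]
    split_ifs with h1 h2
    · exact absurd (h1.1.trans h2.1.symm) hij
    · right; rfl
    · left; rfl
    · left; rfl

lemma key (hmo : DiagDom mo) (μ : mo.syn) :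
    ∀ (h : Fin n → MvPolynomial (Fin n ⊕ Fin n × Fin n) K),
      (∀ i, h i ≠ 0 → mo.toSyn (leadExp mo (h i)) + mo.toSyn (Eexp i) ≤ μ) →
      (∑ i, h i * fgen K i) ≠ 0 →
      ∃ i, Eexp i ≤ leadExp mo (∑ i, h i * fgen K i) := by
  classical
  induction μ using WellFoundedLT.induction with
  | _ μ ihμ =>
  have Hsupp : ∀ (h' : Fin n → MvPolynomial (Fin n ⊕ Fin n × Fin n) K),
      (∀ i, h' i ≠ 0 → mo.toSyn (leadExp mo (h' i)) + mo.toSyn (Eexp i) ≤ μ) →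
      ∀ b ∈ (∑ i, h' i * fgen K i).support, mo.toSyn b ≤ μ := by
    intro h' hb' b hbs
    obtain ⟨i, -, hbi⟩ := Finset.mem_biUnion.mp (support_sum hbs)
    have hne : h' i ≠ 0 := by
      intro h0; rw [h0, zero_mul] at hbi; exact absurd hbi (by simp)
    obtain ⟨c, hcs, d, hds, rfl⟩ := mul_support_sub hbi
    have hd : mo.toSyn d ≤ mo.toSyn (Eexp i) := by
      rw [← lead_fgen (K := K) hmo i]; exact le_lead hds
    calc mo.toSyn (c + d) = mo.toSyn c + mo.toSyn d := map_add _ _ _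
      _ ≤ mo.toSyn (leadExp mo (h' i)) + mo.toSyn (Eexp i) := add_le_add (le_lead hcs) hd
      _ ≤ μ := hb' i hne
  have H1 : ∀ (h' : Fin n → MvPolynomial (Fin n ⊕ Fin n × Fin n) K),
      (∀ i, h' i ≠ 0 → mo.toSyn (leadExp mo (h' i)) + mo.toSyn (Eexp i) ≤ μ) →
      coeff (mo.toSyn.symm μ) (∑ i, h' i * fgen K i) ≠ 0 →
      ∃ i, Eexp i ≤ leadExp mo (∑ i, h' i * fgen K i) := by
    intro h' hb' hc
    have hlead : leadExp mo (∑ i, h' i * fgen K i) = mo.toSyn.symm μ :=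
      lead_eq_of hc (fun b hbs => by
        rw [AddEquiv.apply_symm_apply]; exact Hsupp h' hb' b hbs)
    have hmem : mo.toSyn.symm μ ∈ (∑ i, h' i * fgen K i).support := mem_support_iff.mpr hc
    obtain ⟨i, -, hbi⟩ := Finset.mem_biUnion.mp (support_sum hmem)
    have hne : h' i ≠ 0 := by
      intro h0; rw [h0, zero_mul] at hbi; exact absurd hbi (by simp)
    obtain ⟨c, hcs, d, hds, hsum⟩ := mul_support_sub hbi
    have h1 : mo.toSyn c ≤ mo.toSyn (leadExp mo (h' i)) := le_lead hcs
    have h2 : mo.toSyn d ≤ mo.toSyn (Eexp i) := by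
      rw [← lead_fgen (K := K) hmo i]; exact le_lead hds
    have heq : mo.toSyn c + mo.toSyn d = μ := by
      rw [← map_add, hsum, AddEquiv.apply_symm_apply]
    have hd : d = Eexp i := by
      by_contra hdne
      have hlt : mo.toSyn d < mo.toSyn (Eexp i) :=
        lt_of_le_of_ne h2 (fun hh => hdne (mo.toSyn.injective hh))
      have h3 : mo.toSyn c + mo.toSyn d
          < mo.toSyn (leadExp mo (h' i)) + mo.toSyn (Eexp i) :=
        add_lt_add_of_le_of_lt h1 hlt
      exact absurd heq (ne_of_lt (lt_of_lt_of_le h3 (hb' i hne)))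
    refine ⟨i, ?_⟩
    rw [hlead, ← hsum, hd]
    exact le_add_self
  have H2 : ∀ (h' : Fin n → MvPolynomial (Fin n ⊕ Fin n × Fin n) K),
      (∀ i, h' i ≠ 0 → mo.toSyn (leadExp mo (h' i)) + mo.toSyn (Eexp i) ≤ μ) →
      (∑ i, h' i * fgen K i) ≠ 0 →
      (∀ i, h' i ≠ 0 → mo.toSyn (leadExp mo (h' i)) + mo.toSyn (Eexp i) ≠ μ) →
      ∃ i, Eexp i ≤ leadExp mo (∑ i, h' i * fgen K i) := by
    intro h' hb' hg' hA
    have hT : (Finset.univ.filter (fun i : Fin n => h' i ≠ 0)).Nonempty := by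
      by_contra hTe
      rw [Finset.not_nonempty_iff_eq_empty, Finset.filter_eq_empty_iff] at hTe
      exact hg' (Finset.sum_eq_zero fun i _ => by
        rw [not_not.mp (hTe (Finset.mem_univ i)), zero_mul])
    have hval : ∀ i ∈ Finset.univ.filter (fun i : Fin n => h' i ≠ 0),
        mo.toSyn (leadExp mo (h' i)) + mo.toSyn (Eexp i) < μ := fun i hi =>
      lt_of_le_of_ne (hb' i (Finset.mem_filter.mp hi).2) (hA i (Finset.mem_filter.mp hi).2)
    have hbot : (⊥ : mo.syn) < μ := lt_of_le_of_lt bot_le (hval _ hT.choose_spec)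
    have hμ' : (Finset.univ.filter (fun i : Fin n => h' i ≠ 0)).sup
        (fun i => mo.toSyn (leadExp mo (h' i)) + mo.toSyn (Eexp i)) < μ :=
      (Finset.sup_lt_iff hbot).mpr hval
    exact ihμ _ hμ' h'
      (fun i hi => Finset.le_sup
        (f := fun i => mo.toSyn (leadExp mo (h' i)) + mo.toSyn (Eexp i))
        (Finset.mem_filter.mpr ⟨Finset.mem_univ i, hi⟩)) hg'
  suffices H : ∀ (N : ℕ) (h' : Fin n → MvPolynomial (Fin n ⊕ Fin n × Fin n) K),
      (Finset.univ.filter (fun i => h' i ≠ 0 ∧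
        mo.toSyn (leadExp mo (h' i)) + mo.toSyn (Eexp i) = μ)).card ≤ N →
      (∀ i, h' i ≠ 0 → mo.toSyn (leadExp mo (h' i)) + mo.toSyn (Eexp i) ≤ μ) →
      (∑ i, h' i * fgen K i) ≠ 0 →
      ∃ i, Eexp i ≤ leadExp mo (∑ i, h' i * fgen K i) by
    intro h hb hg
    exact H _ h le_rfl hb hg
  intro N
  induction N with
  | zero =>
    intro h' hcard hb' hg'
    by_cases hc : coeff (mo.toSyn.symm μ) (∑ i, h' i * fgen K i) ≠ 0
    · exact H1 h' hb' hc
    · refine H2 h' hb' hg' ?_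
      intro i hi heq
      have hmemA : i ∈ Finset.univ.filter (fun i => h' i ≠ 0 ∧
          mo.toSyn (leadExp mo (h' i)) + mo.toSyn (Eexp i) = μ) :=
        Finset.mem_filter.mpr ⟨Finset.mem_univ i, hi, heq⟩
      have := Finset.card_pos.mpr ⟨i, hmemA⟩
      omega
  | succ N ihN =>
    intro h' hcard hb' hg'
    by_cases hc : coeff (mo.toSyn.symm μ) (∑ i, h' i * fgen K i) ≠ 0
    · exact H1 h' hb' hc
    push_neg at hc
    set A := Finset.univ.filter (fun i => h' i ≠ 0 ∧
      mo.toSyn (leadExp mo (h' i)) + mo.toSyn (Eexp i) = μ) with hAdef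
    by_cases hAe : A = ∅
    · refine H2 h' hb' hg' ?_
      intro i hi heq
      have hmemA : i ∈ A := Finset.mem_filter.mpr ⟨Finset.mem_univ i, hi, heq⟩
      rw [hAe] at hmemA
      exact absurd hmemA (Finset.notMem_empty i)
    have hAne : A.Nonempty := Finset.nonempty_of_ne_empty hAe
    have coeff_mem : ∀ i ∈ A, coeff (mo.toSyn.symm μ) (h' i * fgen K i)
        = coeff (leadExp mo (h' i)) (h' i) := by
      intro i hi
      obtain ⟨-, hne, heq⟩ := Finset.mem_filter.mp hi
      have hlead : leadExp mo (h' i) + Eexp i = mo.toSyn.symm μ := by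
        apply mo.toSyn.injective
        rw [map_add, AddEquiv.apply_symm_apply]
        exact heq
      rw [← hlead]
      have hml := coeff_mul_lead (mo := mo) (h' i) (fgen K i) hne fgen_ne_zero
      rw [lead_fgen (K := K) hmo i] at hml
      rw [hml, show Eexp i = mExp i i from rfl, coeff_fgen, mul_one]
    have coeff_nmem : ∀ i, i ∉ A → coeff (mo.toSyn.symm μ) (h' i * fgen K i) = 0 := by
      intro i hi
      by_cases hne : h' i = 0
      · rw [hne, zero_mul, coeff_zero]
      have hneq : mo.toSyn (leadExp mo (h' i)) + mo.toSyn (Eexp i) ≠ μ := by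
        intro heq; exact hi (Finset.mem_filter.mpr ⟨Finset.mem_univ i, hne, heq⟩)
      apply coeff_mul_lt
      rw [lead_fgen (K := K) hmo i, AddEquiv.apply_symm_apply]
      exact lt_of_le_of_ne (hb' i hne) hneq
    have hsum0 : ∑ k ∈ A, coeff (leadExp mo (h' k)) (h' k) = 0 := by
      have e1 : ∑ k, coeff (mo.toSyn.symm μ) (h' k * fgen K k) = 0 := by
        rw [← coeff_sum]; exact hc
      rw [← Finset.sum_subset (Finset.subset_univ A)
        (fun k _ hk => coeff_nmem k hk)] at e1
      rw [← Finset.sum_congr rfl coeff_mem]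
      exact e1
    obtain ⟨i, hiA⟩ := hAne
    have hlcne : ∀ k ∈ A, coeff (leadExp mo (h' k)) (h' k) ≠ 0 := fun k hk =>
      lead_coeff_ne_zero (Finset.mem_filter.mp hk).2.1
    obtain ⟨j, hjA, hji⟩ : ∃ j ∈ A, j ≠ i := by
      by_contra hcon
      push_neg at hcon
      have hA1 : A = {i} := Finset.eq_singleton_iff_unique_mem.mpr ⟨hiA, fun j hj => hcon j hj⟩
      rw [hA1, Finset.sum_singleton] at hsum0
      exact hlcne i hiA hsum0
    have hij : i ≠ j := Ne.symm hji
    obtain ⟨-, hine, hieq⟩ := Finset.mem_filter.mp hiA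
    obtain ⟨-, hjne, hjeq⟩ := Finset.mem_filter.mp hjA
    have hiμ : leadExp mo (h' i) + Eexp i = mo.toSyn.symm μ := by
      apply mo.toSyn.injective
      rw [map_add, AddEquiv.apply_symm_apply]
      exact hieq
    have hjμ : leadExp mo (h' j) + Eexp j = mo.toSyn.symm μ := by
      apply mo.toSyn.injective
      rw [map_add, AddEquiv.apply_symm_apply]
      exact hjeq
    have hEij : Eexp i + Eexp j ≤ mo.toSyn.symm μ := by
      rw [Finsupp.le_def]
      intro s
      have h1 : Eexp i s ≤ (mo.toSyn.symm μ) s := by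
        rw [← hiμ, Finsupp.add_apply]; exact Nat.le_add_left _ _
      have h2 : Eexp j s ≤ (mo.toSyn.symm μ) s := by
        rw [← hjμ, Finsupp.add_apply]; exact Nat.le_add_left _ _
      rcases Eexp_disj hij s with h0 | h0
      · rw [Finsupp.add_apply, h0, zero_add]; exact h2
      · rw [Finsupp.add_apply, h0, add_zero]; exact h1
    set lam := mo.toSyn.symm μ - (Eexp i + Eexp j) with hlamdef
    have hlamj : lam + Eexp j = leadExp mo (h' i) := by
      ext s
      have e1 := DFunLike.congr_fun hiμ s
      have e2 := Finsupp.le_def.mp hEij s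
      rw [Finsupp.add_apply] at e1
      rw [Finsupp.add_apply] at e2
      rw [Finsupp.add_apply, hlamdef, Finsupp.tsub_apply, Finsupp.add_apply]
      omega
    have hlami : lam + Eexp i = leadExp mo (h' j) := by
      ext s
      have e1 := DFunLike.congr_fun hjμ s
      have e2 := Finsupp.le_def.mp hEij s
      rw [Finsupp.add_apply] at e1
      rw [Finsupp.add_apply] at e2
      rw [Finsupp.add_apply, hlamdef, Finsupp.tsub_apply, Finsupp.add_apply]
      omega
    set c := coeff (leadExp mo (h' i)) (h' i) with hcdef
    have hcne : c ≠ 0 := hlcne i hiA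
    set h'' : Fin n → MvPolynomial (Fin n ⊕ Fin n × Fin n) K := fun k =>
      if k = i then h' i - monomial lam c * fgen K j
      else if k = j then h' j + monomial lam c * fgen K i
      else h' k with h''def
    have h''i : h'' i = h' i - monomial lam c * fgen K j := by rw [h''def]; simp
    have h''j : h'' j = h' j + monomial lam c * fgen K i := by rw [h''def]; simp [hji]
    have h''k : ∀ k, k ≠ i → k ≠ j → h'' k = h' k := by
      intro k hk1 hk2; rw [h''def]; simp [hk1, hk2]
    have hvalpres : ∑ k, h'' k * fgen K k = ∑ k, h' k * fgen K k := by
      have hterm : ∀ k, h'' k * fgen K k = h' k * fgen K k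
          + ((if k = i then -(monomial lam c * fgen K j * fgen K i) else 0)
            + (if k = j then monomial lam c * fgen K i * fgen K j else 0)) := by
        intro k
        rcases eq_or_ne k i with rfl | hk1
        · rw [h''i, if_pos rfl, if_neg hij]; ring
        · rcases eq_or_ne k j with rfl | hk2
          · rw [h''j, if_neg hk1, if_pos rfl]; ring
          · rw [h''k k hk1 hk2, if_neg hk1, if_neg hk2]; ring
      rw [Finset.sum_congr rfl fun k _ => hterm k, Finset.sum_add_distrib,
        Finset.sum_add_distrib, Finset.sum_ite_eq' Finset.univ i,
        Finset.sum_ite_eq' Finset.univ j,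
        if_pos (Finset.mem_univ i), if_pos (Finset.mem_univ j)]
      ring
    have hexp : h'' i = (h' i - monomial (leadExp mo (h' i)) c)
        - monomial lam c * (fgen K j - monomial (Eexp j) 1) := by
      rw [h''i, mul_sub, monomial_mul, mul_one, hlamj]
      ring
    have Si : ∀ b ∈ (h'' i).support, mo.toSyn b + mo.toSyn (Eexp i) < μ := by
      intro b hbs
      rw [hexp] at hbs
      have hbu := support_sub (Fin n ⊕ Fin n × Fin n) (h' i - monomial (leadExp mo (h' i)) c)
        (monomial lam c * (fgen K j - monomial (Eexp j) 1)) hbs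
      rw [Finset.mem_union] at hbu
      rcases hbu with hb1 | hb2
      · have hbc : coeff b (h' i - monomial (leadExp mo (h' i)) c) ≠ 0 :=
          mem_support_iff.mp hb1
        have hbne : b ≠ leadExp mo (h' i) := by
          rintro rfl
          rw [coeff_sub, coeff_monomial, if_pos rfl, ← hcdef, sub_self] at hbc
          exact hbc rfl
        have hbsupp : b ∈ (h' i).support := by
          rw [mem_support_iff]
          intro h0
          rw [coeff_sub, h0, coeff_monomial, if_neg (fun hh => hbne hh.symm),
            sub_zero] at hbc
          exact hbc rfl
        calc mo.toSyn b + mo.toSyn (Eexp i)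
            < mo.toSyn (leadExp mo (h' i)) + mo.toSyn (Eexp i) :=
              add_lt_add_left (lt_lead hbsupp hbne) _
          _ = μ := hieq
      · obtain ⟨cc, hcc, d, hd, rfl⟩ := mul_support_sub hb2
        have hccl : cc = lam := by
          rw [support_monomial, if_neg hcne, Finset.mem_singleton] at hcc; exact hcc
        subst hccl
        have hdc : coeff d (fgen K j - monomial (Eexp j) 1) ≠ 0 := mem_support_iff.mp hd
        have hdne : d ≠ Eexp j := by
          rintro rfl
          rw [coeff_sub, show Eexp j = mExp j j from rfl, coeff_fgen, coeff_monomial,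
            if_pos rfl, sub_self] at hdc
          exact hdc rfl
        have hdsupp : d ∈ (fgen K (n := n) j).support := by
          rw [mem_support_iff]
          intro h0
          rw [coeff_sub, h0, coeff_monomial, if_neg (fun hh => hdne hh.symm),
            sub_zero] at hdc
          exact hdc rfl
        have hdlt : mo.toSyn d < mo.toSyn (Eexp j) := by
          rw [← lead_fgen (K := K) hmo j]
          exact lt_lead hdsupp (by rw [lead_fgen (K := K) hmo j]; exact hdne)
        calc mo.toSyn (lam + d) + mo.toSyn (Eexp i)
            = (mo.toSyn lam + mo.toSyn d) + mo.toSyn (Eexp i) := by rw [map_add]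
          _ < (mo.toSyn lam + mo.toSyn (Eexp j)) + mo.toSyn (Eexp i) :=
              add_lt_add_left (add_lt_add_right hdlt _) _
          _ = mo.toSyn (lam + Eexp j) + mo.toSyn (Eexp i) := by rw [map_add]
          _ = mo.toSyn (leadExp mo (h' i)) + mo.toSyn (Eexp i) := by rw [hlamj]
          _ = μ := hieq
    have Sj : ∀ b ∈ (h'' j).support, mo.toSyn b + mo.toSyn (Eexp j) ≤ μ := by
      intro b hbs
      rw [h''j] at hbs
      have hbu := support_add hbs
      rw [Finset.mem_union] at hbu
      rcases hbu with hb1 | hb2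
      · calc mo.toSyn b + mo.toSyn (Eexp j)
            ≤ mo.toSyn (leadExp mo (h' j)) + mo.toSyn (Eexp j) :=
              add_le_add_left (le_lead hb1) _
          _ = μ := hjeq
      · obtain ⟨cc, hcc, d, hd, rfl⟩ := mul_support_sub hb2
        have hccl : cc = lam := by
          rw [support_monomial, if_neg hcne, Finset.mem_singleton] at hcc; exact hcc
        subst hccl
        have hdle : mo.toSyn d ≤ mo.toSyn (Eexp i) := by
          rw [← lead_fgen (K := K) hmo i]; exact le_lead hd
        calc mo.toSyn (lam + d) + mo.toSyn (Eexp j)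
            = (mo.toSyn lam + mo.toSyn d) + mo.toSyn (Eexp j) := by rw [map_add]
          _ ≤ (mo.toSyn lam + mo.toSyn (Eexp i)) + mo.toSyn (Eexp j) :=
              add_le_add_left (add_le_add_right hdle _) _
          _ = mo.toSyn (lam + Eexp i) + mo.toSyn (Eexp j) := by rw [map_add]
          _ = μ := by rw [hlami]; exact hjeq
    have hb'' : ∀ k, h'' k ≠ 0 → mo.toSyn (leadExp mo (h'' k)) + mo.toSyn (Eexp k) ≤ μ := by
      intro k hk
      rcases eq_or_ne k i with rfl | hk1
      · exact le_of_lt (Si _ (lead_mem hk))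
      rcases eq_or_ne k j with rfl | hk2
      · exact Sj _ (lead_mem hk)
      · rw [h''k k hk1 hk2] at hk ⊢; exact hb' k hk
    have hsub : Finset.univ.filter (fun k => h'' k ≠ 0 ∧
        mo.toSyn (leadExp mo (h'' k)) + mo.toSyn (Eexp k) = μ) ⊆ A.erase i := by
      intro k hk
      obtain ⟨-, hkne, hkeq⟩ := Finset.mem_filter.mp hk
      rw [Finset.mem_erase]
      constructor
      · rintro rfl
        exact absurd hkeq (ne_of_lt (Si _ (lead_mem hkne)))
      · rcases eq_or_ne k j with rfl | hk2
        · exact hjA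
        · have hk1 : k ≠ i := by
            rintro rfl
            exact absurd hkeq (ne_of_lt (Si _ (lead_mem hkne)))
          rw [h''k k hk1 hk2] at hkne hkeq
          exact Finset.mem_filter.mpr ⟨Finset.mem_univ k, hkne, hkeq⟩
    have hcard'' : (Finset.univ.filter (fun k => h'' k ≠ 0 ∧
        mo.toSyn (leadExp mo (h'' k)) + mo.toSyn (Eexp k) = μ)).card ≤ N := by
      have h1 := Finset.card_le_card hsub
      have h2 := Finset.card_erase_of_mem hiA
      have h3 := Finset.card_pos.mpr ⟨i, hiA⟩
      omega
    have hg'' : (∑ k, h'' k * fgen K k) ≠ 0 := by rw [hvalpres]; exact hg'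
    have hres := ihN h'' hcard'' hb'' hg''
    rwa [hvalpres] at hres

lemma gb (hmo : DiagDom mo) {g : MvPolynomial (Fin n ⊕ Fin n × Fin n) K}
    (hmem : g ∈ Ideal.span (Set.range (fgen K (n := n)))) (hg : g ≠ 0) :
    ∃ i, Eexp i ≤ leadExp mo g := by
  classical
  obtain ⟨h, hsum⟩ := Ideal.mem_span_range_iff_exists_fun.mp hmem
  rw [← hsum] at hg ⊢
  exact key hmo (Finset.univ.sup (fun i => mo.toSyn (leadExp mo (h i)) + mo.toSyn (Eexp i)))
    h (fun i _ => Finset.le_sup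
      (f := fun i => mo.toSyn (leadExp mo (h i)) + mo.toSyn (Eexp i)) (Finset.mem_univ i)) hg

end Key

end Stmt15Aux

/-- the case `m = 1`. Let `I = (x₁,…,x_n)` be the maximal ideal of
`R = K[x₁,…,x_n]`, `Y` an `n×n` matrix of indeterminates, `S = R[Y]`,
`𝔞 = (entries of Y·[x₁,…,x_n]ᵀ)` and `J = 𝔞 : I S` the generic link. With respect to
any monomial order in which the diagonal variables dominate lexicographically
(`Y_{1,1} > Y_{2,2} > … > Y_{n,n}`), the initial ideal of `J` is
`(Y_{1,1}x₁, …, Y_{n,n}x_n, Y_{1,1}Y_{2,2}⋯Y_{n,n})`.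
The variables of `S` are indexed by `Fin n ⊕ (Fin n × Fin n)`: `Sum.inl j` is `x_j`
and `Sum.inr (i, j)` is `Y_{i,j}`. -/
theorem stmt_15 (n : ℕ) (hn : 1 ≤ n)
    (mo : MonomialOrder (Fin n ⊕ Fin n × Fin n))
    (hmo : ∀ u v : (Fin n ⊕ Fin n × Fin n) →₀ ℕ,
      toLex (fun i : Fin n => u (Sum.inr (i, i))) <
          toLex (fun i : Fin n => v (Sum.inr (i, i))) →
        mo.toSyn u < mo.toSyn v) :
    initialIdeal mo
        (Submodule.colon
          (Ideal.span (Set.range fun i : Fin n =>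
            ∑ j : Fin n, (X (Sum.inr (i, j)) * X (Sum.inl j) :
              MvPolynomial (Fin n ⊕ Fin n × Fin n) K)))
          (Ideal.span (Set.range fun j : Fin n =>
            (X (Sum.inl j) : MvPolynomial (Fin n ⊕ Fin n × Fin n) K)))) =
      Ideal.span
        ({ f | ∃ i : Fin n, f = X (Sum.inr (i, i)) * X (Sum.inl i) } ∪
          {∏ i : Fin n, (X (Sum.inr (i, i)) : MvPolynomial (Fin n ⊕ Fin n × Fin n) K)}) := by
  classical
  have hdom : Stmt15Aux.DiagDom mo := hmo
  have hrange : (Set.range fun i : Fin n =>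
      ∑ j : Fin n, (X (Sum.inr (i, j)) * X (Sum.inl j) :
        MvPolynomial (Fin n ⊕ Fin n × Fin n) K)) = Set.range (Stmt15Aux.fgen K (n := n)) := rfl
  apply le_antisymm
  · rw [initialIdeal, Ideal.span_le]
    rintro g ⟨f, hf, hf0, rfl⟩
    by_cases hall : ∀ i : Fin n, 1 ≤ (leadExp mo f) (Sum.inr (i, i))
    · have hP : Stmt15Aux.Pexp n ≤ leadExp mo f := by
        rw [Finsupp.le_def]
        intro s
        rcases s with k | ⟨a, b⟩
        · rw [show Stmt15Aux.Pexp n (Sum.inl k)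
              = 0 from Stmt15Aux.permExp_apply_inl 1 k]
          exact Nat.zero_le _
        · rcases eq_or_ne a b with rfl | hne
          · rw [Stmt15Aux.Pexp_eq_permExp, Stmt15Aux.permExp_apply_inr,
              if_pos (Equiv.Perm.one_apply a)]
            exact hall a
          · rw [Stmt15Aux.Pexp_eq_permExp, Stmt15Aux.permExp_apply_inr,
              if_neg (by rw [Equiv.Perm.one_apply]; exact fun h => hne h.symm)]
            exact Nat.zero_le _
      have hprod : (∏ i : Fin n,
          (X (Sum.inr (i, i)) : MvPolynomial (Fin n ⊕ Fin n × Fin n) K))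
          = monomial (Stmt15Aux.Pexp n) 1 :=
        Stmt15Aux.prod_X_monomial Finset.univ _
      have heq : monomial (leadExp mo f) (1 : K)
          = (∏ i : Fin n, X (Sum.inr (i, i)))
            * monomial (leadExp mo f - Stmt15Aux.Pexp n) 1 := by
        rw [hprod, monomial_mul, one_mul, add_tsub_cancel_of_le hP]
      rw [heq]
      exact Ideal.mul_mem_right _ _ (Ideal.subset_span (Set.mem_union_right _ rfl))
    · push_neg at hall
      obtain ⟨i0, hi0⟩ := hall
      have hi00 : (leadExp mo f) (Sum.inr (i0, i0)) = 0 := by omega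
      have hfx : f * X (Sum.inl i0)
          ∈ Ideal.span (Set.range (Stmt15Aux.fgen K (n := n))) := by
        have h2 := Submodule.mem_colon.mp hf (X (Sum.inl i0))
          (Ideal.subset_span ⟨i0, rfl⟩)
        rw [smul_eq_mul] at h2
        rw [← hrange]
        exact h2
      have hfx0 : f * X (Sum.inl i0) ≠ 0 := mul_ne_zero hf0 (X_ne_zero _)
      have hlead2 : leadExp mo (f * X (Sum.inl i0))
          = leadExp mo f + Finsupp.single (Sum.inl i0) 1 :=
        Stmt15Aux.lead_mul_X hf0 _
      obtain ⟨i, hEi⟩ := Stmt15Aux.gb hdom hfx hfx0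
      rw [hlead2] at hEi
      have hii0 : i ≠ i0 := by
        rintro rfl
        have h1 := Finsupp.le_def.mp hEi (Sum.inr (i, i))
        rw [Finsupp.add_apply, hi00, Finsupp.single_apply, if_neg (by simp),
          Stmt15Aux.Eexp_apply_diag, if_pos rfl] at h1
        omega
      have hEiμ : Stmt15Aux.Eexp i ≤ leadExp mo f := by
        rw [Finsupp.le_def]
        intro s
        have h1 := Finsupp.le_def.mp hEi s
        rcases eq_or_ne s (Sum.inl i0) with rfl | hs
        · rw [Stmt15Aux.Eexp_apply_inl, if_neg hii0]
          exact Nat.zero_le _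
        · rwa [Finsupp.add_apply, Finsupp.single_apply,
            if_neg (fun hc => hs hc.symm), add_zero] at h1
      have heq : monomial (leadExp mo f) (1 : K)
          = (X (Sum.inr (i, i)) * X (Sum.inl i))
            * monomial (leadExp mo f - Stmt15Aux.Eexp i) 1 := by
        rw [Stmt15Aux.X_mul_X,
          show Finsupp.single (Sum.inr (i, i)) 1 + Finsupp.single (Sum.inl i) 1
            = Stmt15Aux.Eexp i from rfl,
          monomial_mul, one_mul, add_tsub_cancel_of_le hEiμ]
      rw [heq]
      exact Ideal.mul_mem_right _ _ (Ideal.subset_span (Set.mem_union_left _ ⟨i, rfl⟩))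
  · rw [Ideal.span_le]
    rintro g hg
    rcases hg with ⟨i, rfl⟩ | rfl
    · apply Ideal.subset_span
      refine ⟨Stmt15Aux.fgen K i, ?_, Stmt15Aux.fgen_ne_zero, ?_⟩
      · rw [Submodule.mem_colon]
        intro p hp
        rw [smul_eq_mul]
        exact Ideal.mul_mem_right _ _ (Ideal.subset_span ⟨i, rfl⟩)
      · rw [Stmt15Aux.lead_fgen hdom i]
        exact Stmt15Aux.X_mul_X _ _
    · apply Ideal.subset_span
      refine ⟨(Stmt15Aux.Mmat K n).det, ?_, Stmt15Aux.det_ne_zero, ?_⟩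
      · rw [show (Ideal.span (Set.range fun i : Fin n =>
            ∑ j : Fin n, (X (Sum.inr (i, j)) * X (Sum.inl j) :
              MvPolynomial (Fin n ⊕ Fin n × Fin n) K)))
            = Ideal.span (Set.range (Stmt15Aux.fgen K (n := n))) from by rw [hrange]]
        exact Stmt15Aux.det_colon
      · rw [Stmt15Aux.lead_det hdom]
        exact Stmt15Aux.prod_X_monomial Finset.univ _
end

section
/- Let A₁ ≤ … ≤ A_{2r+1} be a chain of (m−1)-element subsets of {2,…,n} such that every (i,j) ∈ V with (i,j) ∉ D_{A_1} ∩ D_{A_{2r+1}} satisfies (i,j) ∉ D_{A_k} for all k ∈ [2r+1]. Then, with δ = ∏_{k=1}^{r+1} β_{A_{2k−1}} and γ = ν · ∏_{k=1}^{2r+1} β_{A_k} (ν the product of all variables x_{i,j} with (i,j) ∈ V), δ² divides γ. -/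
/-!
Since the chain is monotone, every `D_{A_k}` contains `D_{A_1} ∩ D_{A_{2r+1}}`, and the hypothesis
gives the reverse inclusion. Hence all the `β_{A_k}` equal one monomial `β`, so that `δ² = β^{2r+2}`,
while `ν = β · ∏_{D_{A_1}} x_{i,j}` gives `γ = β^{2r+2} · ∏_{D_{A_1}} x_{i,j}`.
-/

open MvPolynomial Finset

/-- The set `V = {(i,j) ∈ [m]×[n] : m−i < j ≤ n−i+1}` (1-based indices). -/
def Vset (m n : ℕ) : Finset (ℕ × ℕ) :=
  ((Finset.Icc 1 m) ×ˢ (Finset.Icc 1 n)).filter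
    (fun p => m - p.1 < p.2 ∧ p.2 ≤ n - p.1 + 1)

/-- `a : ℕ → ℕ` represents an `(m−1)`-element subset `A = {a 1 < … < a (m−1)} ⊆ {2,…,n}`,
together with the conventions `a 0 = 1` and `a m = n + 1`. -/
def SubsetRep (m n : ℕ) (a : ℕ → ℕ) : Prop :=
  a 0 = 1 ∧ a m = n + 1 ∧ ∀ i < m, a i < a (i + 1)

/-- The region `D_A = {(i,j) ∈ V : a_{m−i} ≤ j < a_{m−i+1}}`. -/
def Dset (m n : ℕ) (a : ℕ → ℕ) : Finset (ℕ × ℕ) :=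
  (Vset m n).filter (fun p => a (m - p.1) ≤ p.2 ∧ p.2 < a (m - p.1 + 1))

variable (K : Type*) [Field K]

/-- The squarefree monomial `β_A = ∏_{(i,j) ∈ V ∖ D_A} x_{i,j}`. -/
noncomputable def betaM (m n : ℕ) (a : ℕ → ℕ) : MvPolynomial (ℕ × ℕ) K :=
  ∏ p ∈ Vset m n \ Dset m n a, X p

/-- The antidiagonal monomial `α_j = ∏_{i=1}^m x_{m−i+1, j+i−1}`. -/
noncomputable def alphaM (m : ℕ) (j : ℕ) : MvPolynomial (ℕ × ℕ) K :=
  ∏ i ∈ Finset.Icc 1 m, X (m - i + 1, j + i - 1)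

/-- The ideal `N` generated by the monomials `β_A` for all `(m−1)`-element subsets
`A ⊆ {2,…,n}`. -/
noncomputable def Nideal (m n : ℕ) : Ideal (MvPolynomial (ℕ × ℕ) K) :=
  Ideal.span { f | ∃ a : ℕ → ℕ, SubsetRep m n a ∧ f = betaM K m n a }

/-- `A k`, `1 ≤ k ≤ s`, is a chain `A₁ ≤ … ≤ A_s` of `(m−1)`-element subsets of `{2,…,n}`,
where `≤` is the componentwise partial order. -/
def BetaChain (m n s : ℕ) (A : ℕ → ℕ → ℕ) : Prop :=
  (∀ k, 1 ≤ k → k ≤ s → SubsetRep m n (A k)) ∧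
    (∀ k, 1 ≤ k → k + 1 ≤ s → ∀ i ≤ m, A k i ≤ A (k + 1) i)

/-- `W^{[2]}` : the ideal generated by the squares of all the monomials in `W`. -/
noncomputable def bracketTwo {σ : Type*} (W : Ideal (MvPolynomial σ K)) :
    Ideal (MvPolynomial σ K) :=
  Ideal.span { g | ∃ d : σ →₀ ℕ, (monomial d (1 : K)) ∈ W ∧ g = (monomial d (1 : K)) ^ 2 }

lemma BetaChain.mono {m n s : ℕ} {A : ℕ → ℕ → ℕ} (hA : BetaChain m n s A)
    {k l : ℕ} (hk : 1 ≤ k) (hkl : k ≤ l) (hls : l ≤ s) {i : ℕ} (hi : i ≤ m) :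
    A k i ≤ A l i := by
  induction l, hkl using Nat.le_induction with
  | base => exact le_rfl
  | succ l hkl ih => exact (ih (by omega)).trans (hA.2 l (by omega) (by omega) i hi)

lemma fst_mem_Icc_of_mem_Vset {m n : ℕ} {p : ℕ × ℕ} (hp : p ∈ Vset m n) :
    p.1 ∈ Icc 1 m :=
  (mem_product.mp (mem_filter.mp hp).1).1

lemma Dset_inter_subset {m n : ℕ} {a b c : ℕ → ℕ}
    (hab : ∀ i ≤ m, a i ≤ b i) (hbc : ∀ i ≤ m, b i ≤ c i) :
    Dset m n a ∩ Dset m n c ⊆ Dset m n b := by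
  intro p hp
  obtain ⟨hpa, hpc⟩ := mem_inter.mp hp
  simp only [Dset, mem_filter] at hpa hpc ⊢
  have hp1 := mem_Icc.mp (fst_mem_Icc_of_mem_Vset hpa.1)
  exact ⟨hpa.1, (hbc _ (by omega)).trans hpc.2.1, hpa.2.2.trans_le (hab _ (by omega))⟩

lemma prod_X_Vset_eq_betaM_mul (m n : ℕ) (a : ℕ → ℕ) :
    ∏ p ∈ Vset m n, (X p : MvPolynomial (ℕ × ℕ) K) = betaM K m n a * ∏ p ∈ Dset m n a, X p :=
  (prod_sdiff (filter_subset _ _)).symm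

lemma BetaChain.Dset_eq_inter {m n s : ℕ} {A : ℕ → ℕ → ℕ} (hA : BetaChain m n s A)
    (hyp : ∀ p ∈ Vset m n, p ∉ Dset m n (A 1) ∩ Dset m n (A s) →
      ∀ k, 1 ≤ k → k ≤ s → p ∉ Dset m n (A k))
    {k : ℕ} (hk : 1 ≤ k) (hks : k ≤ s) :
    Dset m n (A k) = Dset m n (A 1) ∩ Dset m n (A s) := by
  refine subset_antisymm (fun p hp => ?_) ?_
  · by_contra hpS
    exact hyp p (mem_filter.mp hp).1 hpS k hk hks hp
  · exact Dset_inter_subset (fun _ hi => hA.mono le_rfl hk hks hi)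
      (fun _ hi => hA.mono hk hks le_rfl hi)

lemma BetaChain.betaM_eq {m n s : ℕ} {A : ℕ → ℕ → ℕ} (hA : BetaChain m n s A)
    (hyp : ∀ p ∈ Vset m n, p ∉ Dset m n (A 1) ∩ Dset m n (A s) →
      ∀ k, 1 ≤ k → k ≤ s → p ∉ Dset m n (A k))
    {k : ℕ} (hk : 1 ≤ k) (hks : k ≤ s) :
    betaM K m n (A k) = betaM K m n (A 1) := by
  unfold betaM
  rw [hA.Dset_eq_inter hyp hk hks, ← hA.Dset_eq_inter hyp le_rfl (hk.trans hks)]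

theorem stmt_18 (m n r : ℕ)
    (A : ℕ → ℕ → ℕ) (hA : BetaChain m n (2 * r + 1) A)
    (hyp : ∀ p ∈ Vset m n, p ∉ Dset m n (A 1) ∩ Dset m n (A (2 * r + 1)) →
      ∀ k, 1 ≤ k → k ≤ 2 * r + 1 → p ∉ Dset m n (A k)) :
    (∏ k ∈ Finset.Icc 1 (r + 1), betaM K m n (A (2 * k - 1))) ^ 2 ∣
      (∏ p ∈ Vset m n, (X p : MvPolynomial (ℕ × ℕ) K)) *
        ∏ k ∈ Finset.Icc 1 (2 * r + 1), betaM K m n (A k) := by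
  set β := betaM K m n (A 1)
  have hδ : ∏ k ∈ Icc 1 (r + 1), betaM K m n (A (2 * k - 1)) = β ^ (r + 1) := by
    rw [prod_eq_pow_card fun k hk => hA.betaM_eq K hyp (by grind) (by grind), Nat.card_Icc,
      Nat.add_sub_cancel]
  have hγ : ∏ k ∈ Icc 1 (2 * r + 1), betaM K m n (A k) = β ^ (2 * r + 1) := by
    rw [prod_eq_pow_card fun k hk => hA.betaM_eq K hyp (mem_Icc.mp hk).1 (mem_Icc.mp hk).2,
      Nat.card_Icc, Nat.add_sub_cancel]
  rw [hδ, hγ, prod_X_Vset_eq_betaM_mul K m n (A 1)]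
  exact ⟨∏ p ∈ Dset m n (A 1), X p, by ring⟩
end
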